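/- arXiv:1506.00926 — 2 statements merged into one kernel-verified Lean document; each statement's English description precedes it below -/
import Mathlib

section
/- Structure equation for the inverted map: Let n ≥ 2, let U ⊆ ℝ² be open, and let u : U → ℝ^{n+1} be smooth, nowhere vanishing, with Δu = 0 on U. Set v = u/|u|² and, for 1 ≤ i, j ≤ n+1, X_{i,j} = 2 (v_j ∇v_i − v_i ∇v_j)/|v|⁴. Then for each 1 ≤ j ≤ n+1 one has the pointwise identity on U: −div(∇v_j/|v|²) = Σ_{i=1}^{n+1} ⟨X_{i,j}, ∇v_i⟩, where ⟨·,·⟩ is the Euclidean inner product on ℝ². -/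
/-!
Write `q = |u|²`. Then `|v|⁻² = q` and `u_j = q v_j`, so the product rule gives
`q ∇v_j = ∇u_j - v_j ∇q`, and the left side is `-div(∇u_j - v_j ∇q) = ⟨∇v_j, ∇q⟩ + v_j Δq`, where
`Δq = 2 |∇u|²` because `u` is harmonic. On the other side, in terms of `u` one has
`X_{i,j} = 2 (u_j ∇u_i - u_i ∇u_j)`, and with `∇q = 2 Σ_i u_i ∇u_i` and `q = Σ_i u_i²` the sum
`Σ_i ⟨X_{i,j}, ∇v_i⟩` collapses to the same expression.
-/

open MeasureTheory Filter Topology Set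
open scoped RealInnerProductSpace

noncomputable section

/-- The Euclidean plane. -/
abbrev E2 : Type := EuclideanSpace ℝ (Fin 2)
/-- Euclidean space `ℝ^{n+1}`. -/
abbrev Ey (n : ℕ) : Type := EuclideanSpace ℝ (Fin (n + 1))

/-- Standard basis vectors of the plane. -/
def e2 (i : Fin 2) : E2 := EuclideanSpace.single i 1

/-- The Laplacian of a map on the plane. -/
def lapl {F : Type*} [NormedAddCommGroup F] [NormedSpace ℝ F] (u : E2 → F) (x : E2) : F :=
  ∑ i : Fin 2, fderiv ℝ (fun y => fderiv ℝ u y (e2 i)) x (e2 i)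

/-- The squared (Frobenius) norm `|∇u|² = Σ_j |∇u_j|²` of the gradient. -/
def gradSq {F : Type*} [NormedAddCommGroup F] [NormedSpace ℝ F] (u : E2 → F) (x : E2) : ℝ :=
  ∑ i : Fin 2, ‖fderiv ℝ u x (e2 i)‖ ^ 2

/-- The divergence of a plane vector field. -/
def divE (F : E2 → E2) (x : E2) : ℝ :=
  ∑ i : Fin 2, fderiv ℝ F x (e2 i) i

/-- The composition `σ ∘ u` of `u` with the inversion `σ(z) = z/|z|²` with respect to the
unit sphere. -/
def invmap {n : ℕ} (u : E2 → Ey n) : E2 → Ey n :=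
  fun x => (‖u x‖ ^ 2)⁻¹ • u x

/-- The vector field `X_{i,j} = 2 (v_j ∇v_i − v_i ∇v_j)/|v|⁴`. -/
def Xfield {n : ℕ} (v : E2 → Ey n) (i j : Fin (n + 1)) (x : E2) : E2 :=
  (2 / ‖v x‖ ^ 4) •
    (v x j • gradient (fun y => v y i) x - v x i • gradient (fun y => v y j) x)

theorem fderiv_piLp_apply {𝕜 ι H : Type*} {E : ι → Type*} [NontriviallyNormedField 𝕜]
    [NormedAddCommGroup H] [NormedSpace 𝕜 H] [∀ i, NormedAddCommGroup (E i)]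
    [∀ i, NormedSpace 𝕜 (E i)] [Fintype ι] {p : ENNReal} [Fact (1 ≤ p)] {f : H → PiLp p E}
    {y : H} (hf : DifferentiableAt 𝕜 f y) (i : ι) (w : H) :
    fderiv 𝕜 (fun x => f x i) y w = fderiv 𝕜 f y w i := by
  have h := (PiLp.hasFDerivAt_apply (𝕜 := 𝕜) p (f y) i).comp y hf.hasFDerivAt
  rw [show (fun x => f x i) = (fun g : PiLp p E => g i) ∘ f from rfl, h.fderiv]
  rfl

theorem ContDiffAt.differentiableAt_fderiv_apply {E F : Type*} [NormedAddCommGroup E]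
    [NormedSpace ℝ E] [NormedAddCommGroup F] [NormedSpace ℝ F] {f : E → F} {x : E}
    (hf : ContDiffAt ℝ 2 f x) (w : E) :
    DifferentiableAt ℝ (fun y => fderiv ℝ f y w) x :=
  ((hf.fderiv_right (m := 1) (by norm_num)).differentiableAt one_ne_zero).clm_apply
    (differentiableAt_const w)

section Gradient

variable {F : Type*} [NormedAddCommGroup F] [InnerProductSpace ℝ F] [CompleteSpace F]

theorem HasGradientAt.mul {f g : F → ℝ} {f' g' x : F} (hf : HasGradientAt f f' x)
    (hg : HasGradientAt g g' x) :
    HasGradientAt (fun y => f y * g y) (f x • g' + g x • f') x := by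
  rw [hasGradientAt_iff_hasFDerivAt] at *
  rw [map_add, map_smul, map_smul]
  exact hf.fun_mul hg

theorem ContDiffAt.differentiableAt_gradient {f : F → ℝ} {x : F} (hf : ContDiffAt ℝ 2 f x) :
    DifferentiableAt ℝ (gradient f) x :=
  (InnerProductSpace.toDual ℝ F).symm.toContinuousLinearEquiv.differentiableAt.comp x
    ((hf.fderiv_right (m := 1) (by norm_num)).differentiableAt one_ne_zero)

theorem gradient_norm_sq_eq_sum {ι : Type*} [Fintype ι] {u : F → EuclideanSpace ℝ ι} {x : F}
    (hu : DifferentiableAt ℝ u x) :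
    gradient (fun y => ‖u y‖ ^ 2) x = (2 : ℝ) • ∑ i, u x i • gradient (fun y => u y i) x := by
  refine ext_inner_right ℝ fun w => ?_
  rw [inner_gradient_left, hu.hasFDerivAt.norm_sq.fderiv]
  simp [inner_smul_left, sum_inner, inner_gradient_left, fderiv_piLp_apply hu, PiLp.inner_apply,
    Finset.mul_sum, mul_comm]

end Gradient

-- With `g i = ∇u_i`, `q = |u|²` and `Q = ∇q`, this is `Σ_i ⟨X_{i,j}, ∇v_i⟩ = ⟨∇v_j, ∇q⟩ + v_j Δq`.
theorem sum_inner_wedge {E ι : Type*} [NormedAddCommGroup E] [InnerProductSpace ℝ E] [Fintype ι]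
    (u : ι → ℝ) (g : ι → E) (j : ι) {q : ℝ} {Q : E} (hq : q = ∑ i, u i ^ 2)
    (hQ : Q = (2 : ℝ) • ∑ i, u i • g i) :
    ∑ i, ⟪(2 : ℝ) • (u j • g i - u i • g j), q⁻¹ • (g i - (q⁻¹ * u i) • Q)⟫
      = ⟪q⁻¹ • (g j - (q⁻¹ * u j) • Q), Q⟫ + q⁻¹ * u j * (2 * ∑ i, ‖g i‖ ^ 2) := by
  subst hQ
  set S := ∑ i, u i • g i
  have hS_left (w : E) : ∑ i, u i * ⟪g i, w⟫ = ⟪S, w⟫ := by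
    simp [S, sum_inner, real_inner_smul_left]
  have hS_right (w : E) : ∑ i, u i * ⟪w, g i⟫ = ⟪w, S⟫ := by
    simp [S, inner_sum, real_inner_smul_right]
  have hq_cancel : q⁻¹ ^ 2 * q = q⁻¹ := by
    rcases eq_or_ne q 0 with rfl | hq0
    · simp
    · field_simp
  calc _ = ∑ i, (2 * q⁻¹ * u j * ‖g i‖ ^ 2 - 2 * q⁻¹ ^ 2 * u j * (u i * ⟪g i, (2 : ℝ) • S⟫)
        - 2 * q⁻¹ * (u i * ⟪g j, g i⟫) + 2 * q⁻¹ ^ 2 * u i ^ 2 * ⟪g j, (2 : ℝ) • S⟫) := by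
        refine Finset.sum_congr rfl fun i _ => ?_
        simp only [inner_sub_left, inner_sub_right, real_inner_smul_left, real_inner_smul_right,
          real_inner_self_eq_norm_sq]
        ring
    _ = _ := by
        simp only [Finset.sum_add_distrib, Finset.sum_sub_distrib, ← Finset.mul_sum,
          ← Finset.sum_mul, hS_left, hS_right, ← hq]
        simp only [inner_sub_left, real_inner_smul_left, real_inner_smul_right,
          real_inner_self_eq_norm_sq]
        linear_combination (4 * ⟪g j, S⟫) * hq_cancel

theorem gradient_apply_e2 (f : E2 → ℝ) (x : E2) (a : Fin 2) :
    gradient f x a = fderiv ℝ f x (e2 a) := by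
  rw [← inner_gradient_left, e2, EuclideanSpace.inner_single_right]
  simp

theorem inner_e2_eq_sum (w z : E2) : ⟪w, z⟫ = ∑ a : Fin 2, w a * z a := by
  simp [PiLp.inner_apply, mul_comm]

theorem Filter.EventuallyEq.divE_eq {F G : E2 → E2} {x : E2} (h : F =ᶠ[𝓝 x] G) :
    divE F x = divE G x := by
  simp only [divE, h.fderiv_eq]

theorem divE_sub {F G : E2 → E2} {x : E2} (hF : DifferentiableAt ℝ F x)
    (hG : DifferentiableAt ℝ G x) :
    divE (fun y => F y - G y) x = divE F x - divE G x := by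
  simp [divE, fderiv_fun_sub hF hG, Finset.sum_sub_distrib]

theorem divE_smul {f : E2 → ℝ} {G : E2 → E2} {x : E2} (hf : DifferentiableAt ℝ f x)
    (hG : DifferentiableAt ℝ G x) :
    divE (fun y => f y • G y) x = ⟪gradient f x, G x⟫ + f x * divE G x := by
  simp only [inner_e2_eq_sum, gradient_apply_e2, divE, fderiv_fun_smul hf hG]
  simp only [add_apply, FunLike.coe_smul, Pi.smul_apply,
    ContinuousLinearMap.smulRight_apply, WithLp.ofLp_add, WithLp.ofLp_smul, Pi.add_apply,
    smul_eq_mul, Finset.sum_add_distrib, Finset.mul_sum]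
  ring

theorem divE_gradient {f : E2 → ℝ} {x : E2} (hf : ContDiffAt ℝ 2 f x) :
    divE (gradient f) x = lapl f x := by
  refine Finset.sum_congr rfl fun a _ => ?_
  rw [← fderiv_piLp_apply hf.differentiableAt_gradient]
  simp only [gradient_apply_e2]

theorem lapl_apply {ι : Type*} [Fintype ι] {u : E2 → EuclideanSpace ℝ ι} {x : E2}
    (hu : ContDiffAt ℝ 2 u x) (i : ι) :
    lapl u x i = lapl (fun y => u y i) x := by
  have hdiff : ∀ᶠ y in 𝓝 x, DifferentiableAt ℝ u y :=
    (hu.eventually (by simp)).mono fun y hy => hy.differentiableAt (by norm_num)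
  simp only [lapl, WithLp.ofLp_sum, Finset.sum_apply]
  refine Finset.sum_congr rfl fun a _ => ?_
  rw [← fderiv_piLp_apply (hu.differentiableAt_fderiv_apply (e2 a))]
  congr 1
  refine Filter.EventuallyEq.fderiv_eq ?_
  filter_upwards [hdiff] with y hy
  exact (fderiv_piLp_apply hy i (e2 a)).symm

theorem lapl_norm_sq {F : Type*} [NormedAddCommGroup F] [InnerProductSpace ℝ F] {u : E2 → F}
    {x : E2} (hu : ContDiffAt ℝ 2 u x) :
    lapl (fun y => ‖u y‖ ^ 2) x = 2 * gradSq u x + 2 * ⟪u x, lapl u x⟫ := by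
  have hdiff : ∀ᶠ y in 𝓝 x, DifferentiableAt ℝ u y :=
    (hu.eventually (by simp)).mono fun y hy => hy.differentiableAt (by norm_num)
  simp only [lapl, gradSq, inner_sum, Finset.mul_sum, ← Finset.sum_add_distrib]
  refine Finset.sum_congr rfl fun a _ => ?_
  have hpartial : (fun y => fderiv ℝ (fun z => ‖u z‖ ^ 2) y (e2 a))
      =ᶠ[𝓝 x] fun y => 2 * ⟪u y, fderiv ℝ u y (e2 a)⟫ := by
    filter_upwards [hdiff] with y hy
    simp [hy.hasFDerivAt.norm_sq.fderiv]
  rw [hpartial.fderiv_eq, fderiv_const_mul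
    (hu.differentiableAt (by norm_num) |>.inner ℝ (hu.differentiableAt_fderiv_apply (e2 a))),
    smul_apply,
    fderiv_inner_apply ℝ (hu.differentiableAt (by norm_num)) (hu.differentiableAt_fderiv_apply _),
    real_inner_self_eq_norm_sq]
  simp
  ring

theorem gradSq_eq_sum_norm_sq_gradient {ι : Type*} [Fintype ι] {u : E2 → EuclideanSpace ℝ ι}
    {x : E2} (hu : DifferentiableAt ℝ u x) :
    gradSq u x = ∑ i, ‖gradient (fun y => u y i) x‖ ^ 2 := by
  simp only [gradSq, EuclideanSpace.norm_sq_eq, Real.norm_eq_abs, sq_abs, gradient_apply_e2,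
    fderiv_piLp_apply hu]
  exact Finset.sum_comm

section Inversion

variable {n : ℕ} {u : E2 → Ey n} {y : E2}

theorem invmap_apply (u : E2 → Ey n) (y : E2) (i : Fin (n + 1)) :
    invmap u y i = (‖u y‖ ^ 2)⁻¹ * u y i := rfl

theorem inv_norm_sq_invmap (u : E2 → Ey n) (y : E2) : (‖invmap u y‖ ^ 2)⁻¹ = ‖u y‖ ^ 2 := by
  rcases eq_or_ne (u y) 0 with h | h
  · simp [invmap, h]
  · simp only [invmap, norm_smul, norm_inv, norm_pow, norm_norm]
    field_simp

theorem norm_sq_mul_invmap_apply (u : E2 → Ey n) (y : E2) (i : Fin (n + 1)) :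
    ‖u y‖ ^ 2 * invmap u y i = u y i := by
  rcases eq_or_ne (u y) 0 with h | h
  · simp [invmap, h]
  · rw [invmap_apply]
    field_simp

theorem differentiableAt_invmap_apply (hu : DifferentiableAt ℝ u y) (hy : u y ≠ 0)
    (i : Fin (n + 1)) : DifferentiableAt ℝ (fun z => invmap u z i) y :=
  ((hu.norm_sq ℝ).inv (by positivity)).mul ((differentiableAt_piLp 2).1 hu i)

theorem gradient_invmap_apply (hu : DifferentiableAt ℝ u y) (hy : u y ≠ 0) (i : Fin (n + 1)) :
    gradient (fun z => invmap u z i) y = (‖u y‖ ^ 2)⁻¹ •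
      (gradient (fun z => u z i) y - invmap u y i • gradient (fun z => ‖u z‖ ^ 2) y) := by
  have hq : DifferentiableAt ℝ (fun z => ‖u z‖ ^ 2) y := hu.norm_sq ℝ
  have hq0 : ‖u y‖ ^ 2 ≠ 0 := by positivity
  have h := hq.hasGradientAt.mul (differentiableAt_invmap_apply hu hy i).hasGradientAt
  simp only [norm_sq_mul_invmap_apply] at h
  rw [h.gradient, add_sub_cancel_right, smul_smul, inv_mul_cancel₀ hq0, one_smul]

theorem Xfield_invmap (hu : DifferentiableAt ℝ u y) (hy : u y ≠ 0) (i j : Fin (n + 1)) :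
    Xfield (invmap u) i j y = (2 : ℝ) • (u y j • gradient (fun z => u z i) y
      - u y i • gradient (fun z => u z j) y) := by
  have hq0 : ‖u y‖ ^ 2 ≠ 0 := by positivity
  have h2 : ‖invmap u y‖ ^ 2 = (‖u y‖ ^ 2)⁻¹ := by rw [← inv_norm_sq_invmap u, inv_inv]
  rw [Xfield, gradient_invmap_apply hu hy, gradient_invmap_apply hu hy,
    show ‖invmap u y‖ ^ 4 = (‖invmap u y‖ ^ 2) ^ 2 by ring, h2, invmap_apply, invmap_apply]
  match_scalars <;> field_simp
  ring

theorem neg_divE_inv_norm_sq_invmap_smul_gradient (hu : ContDiffAt ℝ 2 u y) (hy : u y ≠ 0)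
    (harm : lapl u y = 0) (j : Fin (n + 1)) :
    -divE (fun z => (‖invmap u z‖ ^ 2)⁻¹ • gradient (fun w => invmap u w j) z) y
      = ⟪gradient (fun z => invmap u z j) y, gradient (fun z => ‖u z‖ ^ 2) y⟫
        + invmap u y j * (2 * gradSq u y) := by
  have hdu : DifferentiableAt ℝ u y := hu.differentiableAt (by norm_num)
  have huj : ContDiffAt ℝ 2 (fun z => u z j) y := (contDiffAt_piLp 2).1 hu j
  have hq : ContDiffAt ℝ 2 (fun z => ‖u z‖ ^ 2) y := hu.norm_sq ℝ
  have hvj := differentiableAt_invmap_apply hdu hy j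
  have hfield : (fun z => (‖invmap u z‖ ^ 2)⁻¹ • gradient (fun w => invmap u w j) z)
      =ᶠ[𝓝 y] fun z => gradient (fun w => u w j) z
        - invmap u z j • gradient (fun w => ‖u w‖ ^ 2) z := by
    filter_upwards [hu.eventually (by simp), hdu.continuousAt.eventually_ne hy] with z hz hz0
    have hq0 : ‖u z‖ ^ 2 ≠ 0 := by positivity
    rw [inv_norm_sq_invmap, gradient_invmap_apply (hz.differentiableAt (by norm_num)) hz0,
      smul_smul, mul_inv_cancel₀ hq0, one_smul]
  rw [hfield.divE_eq, divE_sub huj.differentiableAt_gradient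
      (hvj.fun_smul hq.differentiableAt_gradient), divE_smul hvj hq.differentiableAt_gradient,
    divE_gradient huj, divE_gradient hq, ← lapl_apply hu, lapl_norm_sq hu, harm]
  simp

theorem sum_inner_Xfield_invmap_gradient (hu : DifferentiableAt ℝ u y) (hy : u y ≠ 0)
    (j : Fin (n + 1)) :
    ∑ i, ⟪Xfield (invmap u) i j y, gradient (fun z => invmap u z i) y⟫
      = ⟪gradient (fun z => invmap u z j) y, gradient (fun z => ‖u z‖ ^ 2) y⟫
        + invmap u y j * (2 * gradSq u y) := by
  rw [gradSq_eq_sum_norm_sq_gradient hu]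
  simp only [Xfield_invmap hu hy, gradient_invmap_apply hu hy]
  simp only [invmap_apply]
  exact sum_inner_wedge (fun i => u y i) (fun i => gradient (fun z => u z i) y) j
    (EuclideanSpace.real_norm_sq_eq _) (gradient_norm_sq_eq_sum hu)

end Inversion

theorem structure_equation_inverted_map_general (n : ℕ)
    (U : Set E2) (hU : IsOpen U) (u : E2 → Ey n)
    (hsm : ContDiffOn ℝ (⊤ : ℕ∞) u U) (hnv : ∀ x ∈ U, u x ≠ 0)
    (hharm : ∀ x ∈ U, lapl u x = 0) :
    ∀ j : Fin (n + 1), ∀ x ∈ U,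
      -divE (fun y => (‖invmap u y‖ ^ 2)⁻¹ • gradient (fun z => invmap u z j) y) x
        = ∑ i : Fin (n + 1),
            ⟪Xfield (invmap u) i j x, gradient (fun z => invmap u z i) x⟫ := by
  intro j x hx
  have hu : ContDiffAt ℝ 2 u x := (hsm.contDiffAt (hU.mem_nhds hx)).of_le (by norm_cast)
  rw [neg_divE_inv_norm_sq_invmap_smul_gradient hu (hnv x hx) (hharm x hx),
    sum_inner_Xfield_invmap_gradient (hu.differentiableAt (by norm_num)) (hnv x hx)]

/-- **Structure equation for the inverted map.** If `u` is smooth, nowhere vanishing and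
harmonic on an open set `U ⊆ ℝ²`, `v = u/|u|²` and
`X_{i,j} = 2 (v_j ∇v_i − v_i ∇v_j)/|v|⁴`, then for each `j` one has on `U`:
`−div(∇v_j/|v|²) = Σ_i ⟨X_{i,j}, ∇v_i⟩`. -/
theorem structure_equation_inverted_map (n : ℕ) (hn : 2 ≤ n)
    (U : Set E2) (hU : IsOpen U) (u : E2 → Ey n)
    (hsm : ContDiffOn ℝ (⊤ : ℕ∞) u U) (hnv : ∀ x ∈ U, u x ≠ 0)
    (hharm : ∀ x ∈ U, lapl u x = 0) :
    ∀ j : Fin (n + 1), ∀ x ∈ U,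
      -divE (fun y => (‖invmap u y‖ ^ 2)⁻¹ • gradient (fun z => invmap u z j) y) x
        = ∑ i : Fin (n + 1),
            ⟪Xfield (invmap u) i j x, gradient (fun z => invmap u z i) x⟫ :=
  structure_equation_inverted_map_general n U hU u hsm hnv hharm
end
end

section
/- Algebraic identity underlying the reflected weak formulation: Let n ≥ 2, let U ⊆ ℝ² be open, and let v : U → ℝ^{n+1} be a smooth nowhere-vanishing map and w : U → ℝ^{n+1} any smooth map. Setting σ(z) = z/|z|² and X_{i,j} = 2 (v_j ∇v_i − v_i ∇v_j)/|v|⁴, one has the pointwise identity on U: ⟨∇v, ∇w⟩/|v|² − Σ_{i,j} ⟨X_{i,j}, ∇v_i⟩ w_j = ⟨∇(σ∘v), ∇(w − 2 Σ_j (v_j w_j/|v|²) v)⟩, where ⟨∇a, ∇b⟩ = Σ_k ⟨∇a_k, ∇b_k⟩ for ℝ^{n+1}-valued maps a, b. -/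
/-!
The identity is pointwise in `x` and is a sum over an orthonormal frame `(b d)` of the plane of
one identity per direction. Write `A = Dv(b d)`, `B = Dw(b d)` and `r = |v|²`. The derivative of
`σ ∘ v` is `Dσ(v) A = A/r − 2⟨v,A⟩ v/r²`, and writing the reflected field as `w − 2⟨v,w⟩ σ(v)`
its derivative is `B − 2(⟨v,B⟩ + ⟨A,w⟩) σ(v) − 2⟨v,w⟩ Dσ(v) A`. Pairing the two is an identity in
any real inner product space, whose right side is `⟨A,B⟩/r − 2/r² (|A|²⟨v,w⟩ − ⟨v,A⟩⟨A,w⟩)`;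
the `X`-term of the theorem is exactly the sum over `d` of the second summand.
-/

open MeasureTheory Filter Topology Set
open scoped RealInnerProductSpace

noncomputable section

section InnerProductSpace

variable {F : Type*} [NormedAddCommGroup F] [InnerProductSpace ℝ F]

/-- `Dσ(V) A`, the derivative of the inversion `σ(z) = z/|z|²` at `V` in the direction `A`. -/
def inversionDeriv (V A : F) : F := (‖V‖ ^ 2)⁻¹ • A - (2 * ⟪V, A⟫ / ‖V‖ ^ 4) • V

theorem inner_inversionDeriv_reflectionDeriv (V W A B : F) (hV : V ≠ 0) :
    ⟪inversionDeriv V A,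
        B - (2 * (⟪V, B⟫ + ⟪A, W⟫)) • (‖V‖ ^ 2)⁻¹ • V - (2 * ⟪V, W⟫) • inversionDeriv V A⟫ =
      ⟪A, B⟫ / ‖V‖ ^ 2 - 2 / ‖V‖ ^ 4 * (‖A‖ ^ 2 * ⟪V, W⟫ - ⟪V, A⟫ * ⟪A, W⟫) := by
  have hV' : ‖V‖ ≠ 0 := norm_ne_zero_iff.mpr hV
  simp only [inversionDeriv, inner_sub_left, inner_sub_right, real_inner_smul_left,
    real_inner_smul_right]
  simp only [real_inner_self_eq_norm_sq, real_inner_comm A V]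
  field_simp
  ring

theorem reflection_eq_sub_smul_inv_norm_sq_smul {α : Type*} (v w : α → F) :
    (fun y => w y - (2 * ⟪v y, w y⟫ / ‖v y‖ ^ 2) • v y) =
      fun y => w y - (2 * ⟪v y, w y⟫) • (‖v y‖ ^ 2)⁻¹ • v y := by
  simp only [smul_smul, div_eq_mul_inv]

variable {E : Type*} [NormedAddCommGroup E] [NormedSpace ℝ E] {v w : E → F} {x : E}

theorem differentiableAt_inv_norm_sq_smul (hv : DifferentiableAt ℝ v x) (hv0 : v x ≠ 0) :
    DifferentiableAt ℝ (fun y => (‖v y‖ ^ 2)⁻¹ • v y) x :=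
  ((hv.norm_sq ℝ).fun_inv (pow_ne_zero 2 (norm_ne_zero_iff.mpr hv0))).fun_smul hv

theorem fderiv_inv_norm_sq_smul_apply (hv : DifferentiableAt ℝ v x) (hv0 : v x ≠ 0) (u : E) :
    fderiv ℝ (fun y => (‖v y‖ ^ 2)⁻¹ • v y) x u = inversionDeriv (v x) (fderiv ℝ v x u) := by
  have hr : ‖v x‖ ^ 2 ≠ 0 := pow_ne_zero 2 (norm_ne_zero_iff.mpr hv0)
  have hσ : HasFDerivAt (fun y => (‖v y‖ ^ 2)⁻¹ • v y) _ x :=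
    ((hasFDerivAt_inv hr).comp x hv.hasFDerivAt.norm_sq).smul hv.hasFDerivAt
  rw [hσ.fderiv, inversionDeriv]
  simp only [ContinuousLinearMap.comp_smul, add_apply, smul_apply,
    ContinuousLinearMap.smulRight_apply, ContinuousLinearMap.comp_apply, coe_innerSL_apply,
    ContinuousLinearMap.toSpanSingleton_apply, smul_eq_mul, nsmul_eq_mul, Nat.cast_ofNat]
  module

theorem differentiableAt_reflection (hv : DifferentiableAt ℝ v x) (hw : DifferentiableAt ℝ w x)
    (hv0 : v x ≠ 0) :
    DifferentiableAt ℝ (fun y => w y - (2 * ⟪v y, w y⟫ / ‖v y‖ ^ 2) • v y) x := by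
  rw [reflection_eq_sub_smul_inv_norm_sq_smul]
  exact hw.sub (((hv.inner ℝ hw).const_mul 2).fun_smul (differentiableAt_inv_norm_sq_smul hv hv0))

theorem fderiv_reflection_apply (hv : DifferentiableAt ℝ v x) (hw : DifferentiableAt ℝ w x)
    (hv0 : v x ≠ 0) (u : E) :
    fderiv ℝ (fun y => w y - (2 * ⟪v y, w y⟫ / ‖v y‖ ^ 2) • v y) x u =
      fderiv ℝ w x u
        - (2 * (⟪v x, fderiv ℝ w x u⟫ + ⟪fderiv ℝ v x u, w x⟫)) • (‖v x‖ ^ 2)⁻¹ • v x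
        - (2 * ⟪v x, w x⟫) • inversionDeriv (v x) (fderiv ℝ v x u) := by
  have hc : DifferentiableAt ℝ (fun y => 2 * ⟪v y, w y⟫) x := (hv.inner ℝ hw).const_mul 2
  rw [reflection_eq_sub_smul_inv_norm_sq_smul,
    fderiv_fun_sub hw (hc.fun_smul (differentiableAt_inv_norm_sq_smul hv hv0)),
    fderiv_fun_smul hc (differentiableAt_inv_norm_sq_smul hv hv0),
    fderiv_const_mul (hv.inner ℝ hw)]
  simp only [sub_apply, add_apply, smul_apply, ContinuousLinearMap.smulRight_apply,
    fderiv_inner_apply ℝ hv hw, fderiv_inv_norm_sq_smul_apply hv hv0, smul_eq_mul]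
  abel

end InnerProductSpace

section EuclideanSpace

variable {ι κ : Type*} [Fintype ι] [Fintype κ]

theorem fderiv_euclidean_apply {E : Type*} [NormedAddCommGroup E] [NormedSpace ℝ E] {x : E}
    {f : E → EuclideanSpace ℝ ι} (hf : DifferentiableAt ℝ f x) (i : ι) (u : E) :
    fderiv ℝ (fun y => f y i) x u = fderiv ℝ f x u i := by
  have hfi : HasFDerivAt (fun y => f y i) ((EuclideanSpace.proj i).comp (fderiv ℝ f x)) x :=
    (EuclideanSpace.proj (𝕜 := ℝ) i).hasFDerivAt.comp x hf.hasFDerivAt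
  rw [hfi.fderiv]
  rfl

theorem sum_sum_mul_sub_mul_eq (V W : EuclideanSpace ℝ ι) (A : κ → EuclideanSpace ℝ ι) :
    ∑ i, ∑ j, (V j * ∑ d, A d i * A d i - V i * ∑ d, A d j * A d i) * W j =
      ∑ d, (‖A d‖ ^ 2 * ⟪V, W⟫ - ⟪V, A d⟫ * ⟪A d, W⟫) := by
  calc _ = ∑ i, ∑ j, ∑ d, (V j * (A d i * A d i) - V i * (A d j * A d i)) * W j := by
        simp only [Finset.mul_sum, Finset.sum_mul, ← Finset.sum_sub_distrib]
    _ = ∑ d, ∑ i, ∑ j, (V j * (A d i * A d i) - V i * (A d j * A d i)) * W j :=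
        (Finset.sum_congr rfl fun i _ => Finset.sum_comm).trans Finset.sum_comm
    _ = _ := by
        refine Finset.sum_congr rfl fun d _ => ?_
        simp only [EuclideanSpace.real_norm_sq_eq, PiLp.inner_apply, RCLike.inner_apply,
          conj_trivial, Finset.sum_mul_sum, ← Finset.sum_sub_distrib]
        exact Finset.sum_congr rfl fun i _ => Finset.sum_congr rfl fun j _ => by ring

variable {E : Type*} [NormedAddCommGroup E] [InnerProductSpace ℝ E] [CompleteSpace E] {x : E}

theorem inner_gradient_eq_sum (b : OrthonormalBasis κ ℝ E) (f g : E → ℝ) :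
    ⟪gradient f x, gradient g x⟫ = ∑ d, fderiv ℝ f x (b d) * fderiv ℝ g x (b d) := by
  rw [← b.sum_inner_mul_inner]
  refine Finset.sum_congr rfl fun d _ => ?_
  rw [gradient, gradient, InnerProductSpace.toDual_symm_apply, real_inner_comm,
    InnerProductSpace.toDual_symm_apply]

theorem sum_inner_gradient_apply (b : OrthonormalBasis κ ℝ E) {f g : E → EuclideanSpace ℝ ι}
    (hf : DifferentiableAt ℝ f x) (hg : DifferentiableAt ℝ g x) :
    ∑ k, ⟪gradient (fun y => f y k) x, gradient (fun y => g y k) x⟫ =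
      ∑ d, ⟪fderiv ℝ f x (b d), fderiv ℝ g x (b d)⟫ := by
  simp only [inner_gradient_eq_sum b, fderiv_euclidean_apply hf, fderiv_euclidean_apply hg,
    PiLp.inner_apply, RCLike.inner_apply, conj_trivial, mul_comm (fderiv ℝ g x _ _)]
  exact Finset.sum_comm

end EuclideanSpace

theorem sum_sum_inner_Xfield_mul (b : OrthonormalBasis (Fin 2) ℝ E2) {n : ℕ} {v : E2 → Ey n}
    {x : E2} (hv : DifferentiableAt ℝ v x) (W : Ey n) :
    ∑ i, ∑ j, ⟪Xfield v i j x, gradient (fun y => v y i) x⟫ * W j =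
      2 / ‖v x‖ ^ 4 * ∑ d, (‖fderiv ℝ v x (b d)‖ ^ 2 * ⟪v x, W⟫
        - ⟪v x, fderiv ℝ v x (b d)⟫ * ⟪fderiv ℝ v x (b d), W⟫) := by
  rw [← sum_sum_mul_sub_mul_eq]
  simp only [Xfield, real_inner_smul_left, inner_sub_left, inner_gradient_eq_sum b,
    fderiv_euclidean_apply hv, mul_assoc, ← Finset.mul_sum]

theorem algebraic_identity_reflected_weak_formulation_general (n : ℕ)
    (U : Set E2) (hU : IsOpen U) (v w : E2 → Ey n)
    (hv : ContDiffOn ℝ (⊤ : ℕ∞) v U) (hw : ContDiffOn ℝ (⊤ : ℕ∞) w U)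
    (hnv : ∀ x ∈ U, v x ≠ 0) :
    ∀ x ∈ U,
      (∑ k : Fin (n + 1),
          ⟪gradient (fun y => v y k) x, gradient (fun y => w y k) x⟫) / ‖v x‖ ^ 2
        - ∑ i : Fin (n + 1), ∑ j : Fin (n + 1),
            ⟪Xfield v i j x, gradient (fun y => v y i) x⟫ * w x j
      = ∑ k : Fin (n + 1),
          ⟪gradient (fun y => invmap v y k) x,
            gradient (fun y => (w y - (2 * ⟪v y, w y⟫ / ‖v y‖ ^ 2) • v y) k) x⟫ := by
  intro x hx
  have hvx : DifferentiableAt ℝ v x := (hv.contDiffAt (hU.mem_nhds hx)).differentiableAt (by simp)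
  have hwx : DifferentiableAt ℝ w x := (hw.contDiffAt (hU.mem_nhds hx)).differentiableAt (by simp)
  have hv0 : v x ≠ 0 := hnv x hx
  let b := EuclideanSpace.basisFun (Fin 2) ℝ
  unfold invmap
  rw [sum_inner_gradient_apply b hvx hwx, sum_sum_inner_Xfield_mul b hvx,
    sum_inner_gradient_apply b (differentiableAt_inv_norm_sq_smul hvx hv0)
      (differentiableAt_reflection hvx hwx hv0)]
  simp only [fderiv_inv_norm_sq_smul_apply hvx hv0, fderiv_reflection_apply hvx hwx hv0,
    inner_inversionDeriv_reflectionDeriv _ _ _ _ hv0]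
  rw [Finset.sum_div, Finset.mul_sum, ← Finset.sum_sub_distrib]

/-- **Algebraic identity underlying the reflected weak formulation.** For a smooth
nowhere-vanishing `v` and any smooth `w` on an open `U ⊆ ℝ²`, with `σ(z) = z/|z|²` and
`X_{i,j} = 2 (v_j ∇v_i − v_i ∇v_j)/|v|⁴`, one has the pointwise identity on `U`:
`⟨∇v, ∇w⟩/|v|² − Σ_{i,j} ⟨X_{i,j}, ∇v_i⟩ w_j = ⟨∇(σ∘v), ∇(w − 2 Σ_j (v_j w_j/|v|²) v)⟩`. -/
theorem algebraic_identity_reflected_weak_formulation (n : ℕ) (hn : 2 ≤ n)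
    (U : Set E2) (hU : IsOpen U) (v w : E2 → Ey n)
    (hv : ContDiffOn ℝ (⊤ : ℕ∞) v U) (hw : ContDiffOn ℝ (⊤ : ℕ∞) w U)
    (hnv : ∀ x ∈ U, v x ≠ 0) :
    ∀ x ∈ U,
      (∑ k : Fin (n + 1),
          ⟪gradient (fun y => v y k) x, gradient (fun y => w y k) x⟫) / ‖v x‖ ^ 2
        - ∑ i : Fin (n + 1), ∑ j : Fin (n + 1),
            ⟪Xfield v i j x, gradient (fun y => v y i) x⟫ * w x j
      = ∑ k : Fin (n + 1),
          ⟪gradient (fun y => invmap v y k) x,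
            gradient (fun y => (w y - (2 * ⟪v y, w y⟫ / ‖v y‖ ^ 2) • v y) k) x⟫ :=
  algebraic_identity_reflected_weak_formulation_general n U hU v w hv hw hnv
end
end
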